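/- The sequence Π_k is not polynomially bounded: for every real constant C > 0 and every natural number d, there exists an integer k ≥ 1 with Π_k > C·k^d. -/

import Mathlib

/-!
Prefixing `1` to a word over `{1, 2}` and appending as many zeros as the word has `2`s gives a
c-string. For `s ⊆ {1, …, n}`, the word with `2` on `s` and `1` off `s`, padded by `n - |s|`
ones, therefore yields a c-string of length `2n + 1`, and distinct `s` give distinct c-strings.
So `Π_{2n+1} ≥ 2^n`, which outgrows every polynomial in `2n + 1`.
-/

/-- A c-string of length `k` is a sequence of nonnegative integers `(c₁, …, c_k)`
with `c₁ = 1`, `c_{i+1} ≤ 2·c_i` for all `1 ≤ i ≤ k−1`, and `c₁ + ⋯ + c_k = k`. -/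
def IsCString (k : ℕ) (l : List ℕ) : Prop :=
  l.length = k ∧ l.head? = some 1 ∧ l.Chain' (fun a b => b ≤ 2 * a) ∧ l.sum = k

/-- `Π_k`, the number of c-strings of length `k`. -/
noncomputable def numCStrings (k : ℕ) : ℕ :=
  Nat.card {l : List ℕ // IsCString k l}

open Finset Filter Asymptotics

theorem finite_setOf_isCString (k : ℕ) : {l | IsCString k l}.Finite := by
  refine ((List.finite_length_eq (Fin (k + 1)) k).image (List.map Fin.val)).subset ?_
  rintro l ⟨hlen, -, -, hsum⟩
  refine ⟨l.pmap (fun x hx => (⟨x, hx⟩ : Fin (k + 1)))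
    (fun x hx => Nat.lt_succ_of_le (hsum ▸ List.le_sum_of_mem hx)), by simp [hlen], ?_⟩
  simp [List.map_pmap]

theorem isCString_cons_append_replicate_zero {w : List ℕ} (hw : ∀ x ∈ w, 1 ≤ x ∧ x ≤ 2)
    {n : ℕ} (hsum : w.sum = w.length + n) :
    IsCString (w.length + n + 1) (1 :: w ++ List.replicate n 0) := by
  have hv : ∀ x ∈ 1 :: w, 1 ≤ x ∧ x ≤ 2 := List.forall_mem_cons.2 ⟨by norm_num, hw⟩
  refine ⟨by simp, rfl, ?_, by simp +arith [hsum]⟩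
  refine List.isChain_append.2 ⟨?_, List.isChain_replicate_of_rel n le_rfl, ?_⟩
  · refine List.Pairwise.isChain (List.pairwise_of_forall_mem_list fun a ha b hb => ?_)
    have := hv a ha
    have := hv b hb
    omega
  · intro x _ y hy
    rw [List.eq_of_mem_replicate (List.mem_of_mem_head? hy)]
    exact Nat.zero_le _

def cStringOfFinset {n : ℕ} (s : Finset (Fin n)) : List ℕ :=
  1 :: (List.ofFn (fun i => if i ∈ s then 2 else 1) ++ List.replicate (n - #s) 1) ++
    List.replicate #s 0

theorem isCString_cStringOfFinset {n : ℕ} (s : Finset (Fin n)) :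
    IsCString (2 * n + 1) (cStringOfFinset s) := by
  have hs : #s ≤ n := by simpa using card_le_univ s
  have hsum : (List.ofFn fun i => if i ∈ s then 2 else 1).sum = n + #s := by
    simp only [List.sum_ofFn, sum_ite, filter_mem_eq_inter, univ_inter, filter_notMem_eq_sdiff,
      card_sdiff_of_subset (subset_univ s), sum_const, smul_eq_mul, card_univ, Fintype.card_fin]
    omega
  have hw : ∀ x ∈ List.ofFn (fun i => if i ∈ s then 2 else 1) ++ List.replicate (n - #s) 1,
      1 ≤ x ∧ x ≤ 2 := by
    simp only [List.mem_append, List.mem_ofFn, List.mem_replicate]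
    rintro x (⟨i, rfl⟩ | ⟨-, rfl⟩)
    · split_ifs <;> simp
    · simp
  have := isCString_cons_append_replicate_zero hw (n := #s) (by simp +arith [hsum])
  rwa [List.length_append, List.length_ofFn, List.length_replicate,
    show n + (n - #s) + #s + 1 = 2 * n + 1 by omega] at this

theorem cStringOfFinset_injective (n : ℕ) :
    Function.Injective (cStringOfFinset (n := n)) := by
  intro s t h
  simp only [cStringOfFinset, List.cons_append, List.cons.injEq, List.append_assoc, true_and] at h
  have hf := List.ofFn_inj.1 (List.append_inj h (by simp)).1
  ext i
  have := congrFun hf i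
  by_cases hs : i ∈ s <;> by_cases ht : i ∈ t <;> simp_all

theorem two_pow_le_numCStrings (n : ℕ) : 2 ^ n ≤ numCStrings (2 * n + 1) := by
  have : Finite {l // IsCString (2 * n + 1) l} := (finite_setOf_isCString _).to_subtype
  calc 2 ^ n = Nat.card (Finset (Fin n)) := by simp [Nat.card_eq_fintype_card]
    _ ≤ numCStrings (2 * n + 1) :=
      Nat.card_le_card_of_injective (fun s => ⟨cStringOfFinset s, isCString_cStringOfFinset s⟩)
        fun s t h => cStringOfFinset_injective n (congrArg Subtype.val h)

theorem eventually_mul_pow_lt_two_pow (C : ℝ) (d : ℕ) :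
    ∀ᶠ n : ℕ in atTop, C * (2 * n + 1 : ℝ) ^ d < 2 ^ n := by
  have hlin : (fun n : ℕ => (2 * n + 1 : ℝ)) =O[atTop] (fun n => (n : ℝ)) := by
    refine IsBigO.of_bound 3 ?_
    filter_upwards [eventually_ge_atTop 1] with n hn
    have : (1 : ℝ) ≤ n := by exact_mod_cast hn
    rw [Real.norm_of_nonneg (by positivity), Real.norm_of_nonneg (by positivity)]
    linarith
  have hsmall : (fun n : ℕ => C * (2 * n + 1 : ℝ) ^ d) =o[atTop] (fun n => (2 : ℝ) ^ n) :=
    ((hlin.pow d).const_mul_left C).trans_isLittleO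
      (isLittleO_pow_const_const_pow_of_one_lt d one_lt_two)
  filter_upwards [hsmall.def one_half_pos] with n hn
  calc C * (2 * n + 1 : ℝ) ^ d ≤ ‖C * (2 * n + 1 : ℝ) ^ d‖ := Real.le_norm_self _
    _ ≤ 1 / 2 * ‖(2 : ℝ) ^ n‖ := hn
    _ < 2 ^ n := by rw [norm_pow, Real.norm_two]; linarith [pow_pos (two_pos : (0 : ℝ) < 2) n]

theorem numCStrings_not_polynomially_bounded_general (C : ℝ) (d : ℕ) :
    ∃ k : ℕ, 1 ≤ k ∧ C * (k : ℝ) ^ d < (numCStrings k : ℝ) := by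
  obtain ⟨n, hn⟩ := (eventually_mul_pow_lt_two_pow C d).exists
  refine ⟨2 * n + 1, by omega, ?_⟩
  calc C * ((2 * n + 1 : ℕ) : ℝ) ^ d = C * (2 * n + 1 : ℝ) ^ d := by push_cast; ring
    _ < 2 ^ n := hn
    _ ≤ numCStrings (2 * n + 1) := by exact_mod_cast two_pow_le_numCStrings n

/-- The sequence `Π_k` is not polynomially bounded: for every real `C > 0` and
every natural number `d`, there exists `k ≥ 1` with `Π_k > C·k^d`. -/
theorem numCStrings_not_polynomially_bounded (C : ℝ) (hC : 0 < C) (d : ℕ) :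
    ∃ k : ℕ, 1 ≤ k ∧ C * (k : ℝ) ^ d < (numCStrings k : ℝ) :=
  numCStrings_not_polynomially_bounded_general C d
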